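/- Let A_0, ..., A_{t-1} be topical operators and suppose rk(A_{n-1}⋯A_1)=1 for some n ≤ t. Let x_{st}=max_i(A_{t-1}⋯A_s 0)_i and F_0^n = σ(A_0,...,A_{n-1}). Then |x_{0t} − x_{1t} − E(x_{0t}−x_{1t} | F_0^n)| = 0 on the event {rk(A_{n-1}⋯A_1)=1}, and in general this conditional deviation is bounded by 1_{{rk(A_{n-1}⋯A_1)≠1}} · |A_0 0|_P, where |x|_P = max_i x_i − min_i x_i. -/

import Mathlib

/-!
Write `Θ = A_{t-1} ⋯ A_1`, so that `x_{0t} - x_{1t} = max Θ(A_0 0) - max Θ 0`. As `Θ` is topical,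
this lies between `min A_0 0` and `max A_0 0 = x_{01}`; on the rank-one event it equals the
`F₀ⁿ`-measurable `x_{0n} - x_{1n}`, since `Θ` factors through `A_{n-1} ⋯ A_1`. Conditional
expectation preserves pointwise bounds by `F₀ⁿ`-measurable functions, which gives both claims once
the bounds are measurable. `x_{01}` is, but `min A_0 0` need not be: it is replaced by the infimum
of `max Θ'(A_0 0) - max Θ' 0` over all tails `Θ'`, still squeezed between `min A_0 0` and
`x_{0t} - x_{1t}`, and measurable because, being 1-Lipschitz in `A_0 0`, it is a countable infimum.
-/

open MeasureTheory

/-- A map on `ℝ^d` is *topical* if it is isotone and additively homogeneous. -/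
def Topical (d : ℕ) (A : (Fin d → ℝ) → (Fin d → ℝ)) : Prop :=
  (∀ x y : Fin d → ℝ, x ≤ y → A x ≤ A y) ∧
  (∀ (x : Fin d → ℝ) (a : ℝ), A (x + fun _ => a) = A x + fun _ => a)

/-- `compOp A s n = A_{s+n-1} ∘ ⋯ ∘ A_s`. -/
def compOp {d : ℕ} (A : ℕ → (Fin d → ℝ) → (Fin d → ℝ)) (s : ℕ) :
    ℕ → (Fin d → ℝ) → (Fin d → ℝ)
  | 0 => id
  | n + 1 => A (s + n) ∘ compOp A s n

/-- `θ` has rank 1: the induced map on `ℝ^d / ℝ·1` is constant. -/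
def Rank1 (d : ℕ) (θ : (Fin d → ℝ) → (Fin d → ℝ)) : Prop :=
  ∀ x y : Fin d → ℝ, ∃ a : ℝ, θ x = θ y + fun _ => a

/-- The projective norm `|x|_P = max_i x_i - min_i x_i`. -/
noncomputable def projNorm {d : ℕ} (x : Fin d → ℝ) : ℝ := (⨆ i, x i) - ⨅ i, x i

/-- `x_{st}(ω) = max_i (A_{t-1}⋯A_s 0)_i` with `A_m(ω) = op (ω m)`. -/
noncomputable def xst {E : Type*} (d : ℕ) [NeZero d]
    (op : E → (Fin d → ℝ) → (Fin d → ℝ)) (s t : ℕ) (ω : ℕ → E) : ℝ :=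
  ⨆ i, compOp (fun m => op (ω m)) s (t - s) 0 i

/-- The σ-algebra `F₀ⁿ = σ(A_0, …, A_{n-1})` on the sequence space. -/
def pastFilt (E : Type*) [MeasurableSpace E] (n : ℕ) :
    MeasurableSpace (ℕ → E) :=
  MeasurableSpace.comap (fun (ω : ℕ → E) (i : Fin n) => ω i) inferInstance

section Topical

variable {d : ℕ} {Φ Ψ : (Fin d → ℝ) → (Fin d → ℝ)}

theorem Topical.id : Topical d id := ⟨fun _ _ h => h, fun _ _ => rfl⟩

theorem Topical.comp (hΦ : Topical d Φ) (hΨ : Topical d Ψ) : Topical d (Φ ∘ Ψ) :=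
  ⟨fun _ _ h => hΦ.1 _ _ (hΨ.1 _ _ h), fun x a => by simp only [Function.comp_apply, hΨ.2, hΦ.2]⟩

theorem Topical.map_le_add_const (hΦ : Topical d Φ) {x y : Fin d → ℝ} {c : ℝ}
    (h : x ≤ y + fun _ => c) : Φ x ≤ Φ y + fun _ => c :=
  hΦ.2 y c ▸ hΦ.1 _ _ h

theorem topical_compOp {A : ℕ → (Fin d → ℝ) → (Fin d → ℝ)} (hA : ∀ m, Topical d (A m))
    (s : ℕ) : ∀ k, Topical d (compOp A s k)
  | 0 => Topical.id
  | k + 1 => (hA (s + k)).comp (topical_compOp hA s k)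

end Topical

section compOp

variable {d : ℕ}

theorem compOp_add (A : ℕ → (Fin d → ℝ) → (Fin d → ℝ)) (s p : ℕ) :
    ∀ q, compOp A s (p + q) = compOp A (s + p) q ∘ compOp A s p
  | 0 => rfl
  | q + 1 => by
    rw [← Nat.add_assoc, compOp, compOp, compOp_add A s p q, Nat.add_assoc]
    rfl

theorem compOp_succ' (A : ℕ → (Fin d → ℝ) → (Fin d → ℝ)) (s k : ℕ) :
    compOp A s (k + 1) = compOp A (s + 1) k ∘ A s := by
  rw [Nat.add_comm, compOp_add]
  rfl

theorem compOp_congr {A A' : ℕ → (Fin d → ℝ) → (Fin d → ℝ)} {s : ℕ} :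
    ∀ {k}, (∀ m, s ≤ m → m < s + k → A m = A' m) → compOp A s k = compOp A' s k
  | 0, _ => rfl
  | k + 1, h => by
    rw [compOp, compOp, h (s + k) (by omega) (by omega),
      compOp_congr fun m h₁ h₂ => h m h₁ (by omega)]

end compOp

section supGap

variable {d : ℕ} [NeZero d] {Φ Ψ : (Fin d → ℝ) → (Fin d → ℝ)}

theorem iSup_add_const_apply (x : Fin d → ℝ) (c : ℝ) :
    ⨆ i, (x + fun _ => c : Fin d → ℝ) i = (⨆ i, x i) + c :=
  ((OrderIso.addRight c).map_ciSup (Set.finite_range x).bddAbove).symm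

theorem Topical.iSup_le_iSup_add (hΦ : Topical d Φ) {x y : Fin d → ℝ} {c : ℝ}
    (h : x ≤ y + fun _ => c) : ⨆ i, Φ x i ≤ (⨆ i, Φ y i) + c := by
  rw [← iSup_add_const_apply]
  exact ciSup_mono (Set.finite_range _).bddAbove (hΦ.map_le_add_const h)

noncomputable def supGap (Φ : (Fin d → ℝ) → (Fin d → ℝ)) (v : Fin d → ℝ) : ℝ :=
  (⨆ i, Φ v i) - ⨆ i, Φ 0 i

theorem Topical.supGap_le (hΦ : Topical d Φ) (v : Fin d → ℝ) : supGap Φ v ≤ ⨆ i, v i := by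
  have := hΦ.iSup_le_iSup_add (y := 0) fun i => by
    simpa using le_ciSup (Set.finite_range v).bddAbove i
  rw [supGap]
  linarith

theorem Topical.le_supGap (hΦ : Topical d Φ) (v : Fin d → ℝ) : ⨅ i, v i ≤ supGap Φ v := by
  have := hΦ.iSup_le_iSup_add (x := 0) (y := v) (c := -⨅ i, v i) fun i => by
    simpa [← sub_eq_add_neg] using ciInf_le (Set.finite_range v).bddBelow i
  rw [supGap]
  linarith

theorem Topical.lipschitzWith_supGap (hΦ : Topical d Φ) : LipschitzWith 1 (supGap Φ) :=
  LipschitzWith.of_le_add fun v w => by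
    have := hΦ.iSup_le_iSup_add (x := v) (y := w) (c := dist v w) fun i => by
      have := dist_le_pi_dist v w i
      rw [Real.dist_eq] at this
      simp only [Pi.add_apply]
      linarith [le_abs_self (v i - w i)]
    rw [supGap, supGap]
    linarith

theorem Topical.supGap_comp_of_rank1 (hΨ : Topical d Ψ) {θ : (Fin d → ℝ) → (Fin d → ℝ)}
    (hθ : Rank1 d θ) (v : Fin d → ℝ) : supGap (Ψ ∘ θ) v = supGap θ v := by
  obtain ⟨a, ha⟩ := hθ v 0
  simp only [supGap, Function.comp_apply, ha, hΨ.2, iSup_add_const_apply]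
  ring

end supGap

theorem LipschitzWith.ciInf {α ι : Type*} [PseudoMetricSpace α] [Nonempty ι]
    {g : ι → α → ℝ} (hg : ∀ j, LipschitzWith 1 (g j))
    (hbdd : ∀ v, BddBelow (Set.range fun j => g j v)) :
    LipschitzWith 1 fun v => ⨅ j, g j v :=
  LipschitzWith.of_le_add fun v w => by
    rw [← sub_le_iff_le_add]
    refine le_ciInf fun j => ?_
    have := (hg j).le_add_mul v w
    have := ciInf_le (hbdd v) j
    simp only [NNReal.coe_one, one_mul] at *
    linarith

theorem exists_countable_iInf_eq_of_lipschitzWith {α ι : Type*} [PseudoMetricSpace α]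
    [TopologicalSpace.SeparableSpace α] [Nonempty α] [Nonempty ι]
    {g : ι → α → ℝ} (hg : ∀ j, LipschitzWith 1 (g j))
    (hbdd : ∀ v, BddBelow (Set.range fun j => g j v)) :
    ∃ s : Set ι, s.Countable ∧ ∀ v, ⨅ j : s, g j v = ⨅ j, g j v := by
  obtain ⟨D, hD⟩ := TopologicalSpace.exists_dense_seq α
  have hJ : ∀ q k : ℕ, ∃ j, g j (D q) < (⨅ j, g j (D q)) + 1 / (k + 1) := fun q k =>
    exists_lt_of_ciInf_lt (lt_add_of_pos_right _ Nat.one_div_pos_of_nat)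
  choose J hJ using hJ
  set s := Set.range (Function.uncurry J)
  have : Nonempty s := ⟨⟨J 0 0, (0, 0), rfl⟩⟩
  have hbdd_s : ∀ v, BddBelow (Set.range fun j : s => g j v) := fun v =>
    (hbdd v).mono (Set.range_comp_subset_range Subtype.val fun j => g j v)
  refine ⟨s, Set.countable_range _, congrFun <| hD.equalizer
    (LipschitzWith.ciInf (g := fun j : s => g j) (fun j => hg j) hbdd_s).continuous
    (LipschitzWith.ciInf hg hbdd).continuous (funext fun q => ?_)⟩
  refine le_antisymm (le_of_forall_pos_lt_add fun ε hε => ?_)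
    (le_ciInf fun j => ciInf_le (hbdd _) _)
  obtain ⟨k, hk⟩ := exists_nat_one_div_lt hε
  calc ⨅ j : s, g j (D q) ≤ g (J q k) (D q) := ciInf_le (hbdd_s _) ⟨J q k, (q, k), rfl⟩
    _ < (⨅ j, g j (D q)) + 1 / (k + 1) := hJ q k
    _ < (⨅ j, g j (D q)) + ε := by linarith

theorem Measurable.iInf_of_lipschitzWith {Ω α ι : Type*} {mΩ : MeasurableSpace Ω}
    [PseudoMetricSpace α] [TopologicalSpace.SeparableSpace α] [Nonempty α] [Nonempty ι]
    {g : ι → α → ℝ} (hg : ∀ j, LipschitzWith 1 (g j))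
    (hbdd : ∀ v, BddBelow (Set.range fun j => g j v)) {V : Ω → α}
    (hgV : ∀ j, Measurable fun ω => g j (V ω)) :
    Measurable fun ω => ⨅ j, g j (V ω) := by
  obtain ⟨s, hs, hs_eq⟩ := exists_countable_iInf_eq_of_lipschitzWith hg hbdd
  have := hs.to_subtype
  simp only [← hs_eq]
  exact Measurable.iInf fun j => hgV j

section condExp

variable {α : Type*} {m m0 : MeasurableSpace α} {μ : Measure α} [IsFiniteMeasure μ]
  {f u : α → ℝ} {s : Set α}

theorem ae_condExp_le_of_forall_le (hm : m ≤ m0) (hs : MeasurableSet[m] s)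
    (hu : Measurable[m] u) (hf : Integrable f μ) (hfu : ∀ x ∈ s, f x ≤ u x) :
    ∀ᵐ x ∂μ, x ∈ s → μ[f | m] x ≤ u x := by
  -- `u` need not be integrable: compare on the `m`-measurable sets where `|u| ≤ k`.
  have htrunc : ∀ k : ℕ, ∀ᵐ x ∂μ, x ∈ s ∩ u ⁻¹' Set.Icc (-k) k → μ[f | m] x ≤ u x := by
    intro k
    set D := s ∩ u ⁻¹' Set.Icc (-k : ℝ) k
    have hD : MeasurableSet[m] D := hs.inter (hu measurableSet_Icc)
    have huD : Integrable (D.indicator u) μ := by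
      refine (integrable_const (k : ℝ)).mono'
        ((hu.mono hm le_rfl).indicator (hm _ hD)).aestronglyMeasurable (ae_of_all _ fun x => ?_)
      by_cases hx : x ∈ D
      · simpa [hx, abs_le] using hx.2
      · simp [hx]
    have hmono : μ[D.indicator f | m] ≤ᵐ[μ] μ[D.indicator u | m] :=
      condExp_mono (hf.indicator (hm _ hD)) huD <| ae_of_all _ fun x => by
        by_cases hx : x ∈ D
        · simpa [hx] using hfu x hx.1
        · simp [hx]
    rw [condExp_of_stronglyMeasurable hm (hu.indicator hD).stronglyMeasurable huD] at hmono
    filter_upwards [hmono, condExp_indicator hf hD] with x hle hind hx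
    simpa [hind, hx] using hle
  filter_upwards [ae_all_iff.2 htrunc] with x hx hxs
  obtain ⟨k, hk⟩ := exists_nat_ge |u x|
  exact hx k ⟨hxs, abs_le.1 hk⟩

theorem ae_le_condExp_of_forall_le (hm : m ≤ m0) (hs : MeasurableSet[m] s)
    (hu : Measurable[m] u) (hf : Integrable f μ) (hfu : ∀ x ∈ s, u x ≤ f x) :
    ∀ᵐ x ∂μ, x ∈ s → u x ≤ μ[f | m] x := by
  filter_upwards [ae_condExp_le_of_forall_le hm hs hu.neg hf.neg fun x hx => neg_le_neg (hfu x hx),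
    condExp_neg f m] with x hx hneg hxs
  simpa [hneg] using hx hxs

theorem ae_condExp_eq_of_forall_eq (hm : m ≤ m0) (hs : MeasurableSet[m] s)
    (hu : Measurable[m] u) (hf : Integrable f μ) (hfu : ∀ x ∈ s, f x = u x) :
    ∀ᵐ x ∂μ, x ∈ s → μ[f | m] x = f x := by
  filter_upwards [ae_condExp_le_of_forall_le hm hs hu hf fun x hx => (hfu x hx).le,
    ae_le_condExp_of_forall_le hm hs hu hf fun x hx => (hfu x hx).ge] with x hle hge hxs
  rw [hfu x hxs]
  exact le_antisymm (hle hxs) (hge hxs)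

theorem ae_abs_sub_condExp_le {ℓ : α → ℝ} (hm : m ≤ m0) (hℓ : Measurable[m] ℓ)
    (hu : Measurable[m] u) (hf : Integrable f μ) (hℓf : ∀ x, ℓ x ≤ f x) (hfu : ∀ x, f x ≤ u x) :
    ∀ᵐ x ∂μ, |f x - μ[f | m] x| ≤ u x - ℓ x := by
  filter_upwards [ae_le_condExp_of_forall_le hm MeasurableSet.univ hℓ hf fun x _ => hℓf x,
    ae_condExp_le_of_forall_le hm MeasurableSet.univ hu hf fun x _ => hfu x] with x hge hle
  rw [abs_sub_le_iff]
  constructor <;> linarith [hℓf x, hfu x, hge trivial, hle trivial]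

end condExp

section Increment

variable {E : Type*} {d : ℕ} [NeZero d] {op : E → (Fin d → ℝ) → (Fin d → ℝ)}

theorem xst_zero_sub_xst_one {t : ℕ} (ht : 1 ≤ t) (ω : ℕ → E) :
    xst d op 0 t ω - xst d op 1 t ω =
      supGap (compOp (fun m => op (ω m)) 1 (t - 1)) (op (ω 0) 0) := by
  obtain ⟨k, rfl⟩ := Nat.exists_eq_add_of_le' ht
  simp [xst, supGap, compOp_succ']

theorem xst_zero_sub_xst_one_le (hop : ∀ e, Topical d (op e)) {t : ℕ} (ht : 1 ≤ t)
    (ω : ℕ → E) : xst d op 0 t ω - xst d op 1 t ω ≤ ⨆ i, op (ω 0) 0 i := by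
  rw [xst_zero_sub_xst_one ht]
  exact (topical_compOp (fun _ => hop _) _ _).supGap_le _

theorem xst_zero_sub_xst_one_of_rank1 (hop : ∀ e, Topical d (op e)) {n t : ℕ} (hn : 1 ≤ n)
    (hnt : n ≤ t) {ω : ℕ → E} (hω : Rank1 d (compOp (fun m => op (ω m)) 1 (n - 1))) :
    xst d op 0 t ω - xst d op 1 t ω = xst d op 0 n ω - xst d op 1 n ω := by
  have hsplit := compOp_add (fun m => op (ω m)) 1 (n - 1) (t - n)
  rw [show n - 1 + (t - n) = t - 1 by omega, show 1 + (n - 1) = n by omega] at hsplit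
  rw [xst_zero_sub_xst_one (hn.trans hnt), xst_zero_sub_xst_one hn, hsplit,
    (topical_compOp (fun _ => hop _) _ _).supGap_comp_of_rank1 hω]

variable (op) in
noncomputable def iInfSupGap (t : ℕ) (e : E) : ℝ :=
  ⨅ τ : ℕ → E, supGap (compOp (fun m => op (τ m)) 1 (t - 1)) (op e 0)

theorem le_iInfSupGap (hop : ∀ e, Topical d (op e)) (t : ℕ) (e : E) :
    ⨅ i, op e 0 i ≤ iInfSupGap op t e :=
  have : Nonempty E := ⟨e⟩
  le_ciInf fun _ => (topical_compOp (fun _ => hop _) _ _).le_supGap _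

theorem bddBelow_range_supGap (hop : ∀ e, Topical d (op e)) (t : ℕ) (v : Fin d → ℝ) :
    BddBelow (Set.range fun τ : ℕ → E => supGap (compOp (fun m => op (τ m)) 1 (t - 1)) v) :=
  ⟨⨅ i, v i, by rintro _ ⟨τ, rfl⟩; exact (topical_compOp (fun _ => hop _) _ _).le_supGap v⟩

theorem iInfSupGap_le (hop : ∀ e, Topical d (op e)) {t : ℕ} (ht : 1 ≤ t) (ω : ℕ → E) :
    iInfSupGap op t (ω 0) ≤ xst d op 0 t ω - xst d op 1 t ω := by
  rw [xst_zero_sub_xst_one ht]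
  exact ciInf_le (bddBelow_range_supGap hop t _) ω

variable [MeasurableSpace E]

theorem measurable_iSup_apply_zero (hmeas : Measurable (xst d op 0 1)) :
    Measurable fun e => ⨆ i, op e 0 i :=
  hmeas.comp (measurable_pi_lambda _ fun _ => measurable_id)

theorem measurable_iInfSupGap [Nonempty E] (hop : ∀ e, Topical d (op e)) {t : ℕ} (ht : 1 ≤ t)
    (hmeas : Measurable fun ω => xst d op 0 t ω - xst d op 1 t ω) :
    Measurable (iInfSupGap op t) := by
  refine Measurable.iInf_of_lipschitzWith
    (fun τ => (topical_compOp (fun _ => hop _) _ _).lipschitzWith_supGap)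
    (bddBelow_range_supGap hop t) fun τ => ?_
  have hupdate (e : E) : supGap (compOp (fun m => op (τ m)) 1 (t - 1)) (op e 0) =
      xst d op 0 t (Function.update τ 0 e) - xst d op 1 t (Function.update τ 0 e) := by
    have hτ : compOp (fun m => op (Function.update τ 0 e m)) 1 (t - 1) =
        compOp (fun m => op (τ m)) 1 (t - 1) :=
      compOp_congr fun m hm _ => by rw [Function.update_of_ne (by omega)]
    rw [xst_zero_sub_xst_one ht, Function.update_self, hτ]
  simp only [hupdate]
  exact hmeas.comp (measurable_update τ)

theorem pastFilt_le (n : ℕ) : pastFilt E n ≤ MeasurableSpace.pi :=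
  (measurable_pi_lambda _ fun _ => measurable_pi_apply _).comap_le

theorem measurable_pastFilt_apply {n i : ℕ} (hi : i < n) :
    Measurable[pastFilt E n] fun ω : ℕ → E => ω i :=
  have hproj : Measurable[pastFilt E n] fun (ω : ℕ → E) (j : Fin n) => ω j :=
    Measurable.of_comap_le le_rfl
  (measurable_pi_apply (⟨i, hi⟩ : Fin n)).comp hproj

end Increment

/-- On the event `{rk(A_{n-1}⋯A_1) = 1}` the conditional deviation
`|x_{0t} - x_{1t} - E(x_{0t} - x_{1t} | F₀ⁿ)|` vanishes, and in general it is
bounded by `1_{{rk(A_{n-1}⋯A_1) ≠ 1}} · |A_0 0|_P`. -/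
theorem conditional_deviation_bound {E : Type*} [MeasurableSpace E]
    {d : ℕ} [NeZero d]
    (μ : Measure (ℕ → E)) [IsProbabilityMeasure μ]
    (op : E → (Fin d → ℝ) → (Fin d → ℝ)) (hop : ∀ e, Topical d (op e))
    (t n : ℕ) (hn : 1 ≤ n) (hnt : n ≤ t)
    (hmeasx : ∀ s u : ℕ, Measurable (xst d op s u))
    (hint : Integrable (fun ω => xst d op 0 t ω - xst d op 1 t ω) μ)
    (hB : MeasurableSet[pastFilt E n]
      {ω : ℕ → E | Rank1 d (compOp (fun m => op (ω m)) 1 (n - 1))})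
    (hFmeas : Measurable[pastFilt E n]
      (fun ω => xst d op 0 n ω - xst d op 1 n ω)) :
    (∀ᵐ ω ∂μ, Rank1 d (compOp (fun m => op (ω m)) 1 (n - 1)) →
      |xst d op 0 t ω - xst d op 1 t ω -
        (μ[fun ω' => xst d op 0 t ω' - xst d op 1 t ω' | pastFilt E n]) ω| = 0) ∧
    (∀ᵐ ω ∂μ,
      |xst d op 0 t ω - xst d op 1 t ω -
        (μ[fun ω' => xst d op 0 t ω' - xst d op 1 t ω' | pastFilt E n]) ω| ≤
      ({ω' : ℕ → E | ¬ Rank1 d (compOp (fun m => op (ω' m)) 1 (n - 1))}.indicator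
          (fun _ => (1 : ℝ)) ω) * projNorm (op (ω 0) 0)) := by
  have : Nonempty E := (nonempty_of_isProbabilityMeasure μ).map (· 0)
  have ht : 1 ≤ t := hn.trans hnt
  set f := fun ω => xst d op 0 t ω - xst d op 1 t ω
  have hdev : ∀ᵐ ω ∂μ,
      |f ω - μ[f | pastFilt E n] ω| ≤ (⨆ i, op (ω 0) 0 i) - iInfSupGap op t (ω 0) :=
    ae_abs_sub_condExp_le (pastFilt_le n)
      ((measurable_iInfSupGap hop ht ((hmeasx 0 t).sub (hmeasx 1 t))).comp
        (measurable_pastFilt_apply hn))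
      ((measurable_iSup_apply_zero (hmeasx 0 1)).comp (measurable_pastFilt_apply hn))
      hint (iInfSupGap_le hop ht) (xst_zero_sub_xst_one_le hop ht)
  have hrank : ∀ᵐ ω ∂μ, Rank1 d (compOp (fun m => op (ω m)) 1 (n - 1)) →
      μ[f | pastFilt E n] ω = f ω :=
    ae_condExp_eq_of_forall_eq (pastFilt_le n) hB hFmeas hint fun _ hω =>
      xst_zero_sub_xst_one_of_rank1 hop hn hnt hω
  refine ⟨?_, ?_⟩
  · filter_upwards [hrank] with ω hω hr
    rw [hω hr, sub_self, abs_zero]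
  · filter_upwards [hrank, hdev] with ω hω hdevω
    by_cases hr : Rank1 d (compOp (fun m => op (ω m)) 1 (n - 1))
    · simp [hω hr, hr, f]
    · classical
      simp only [Set.indicator_apply, Set.mem_ofPred_eq, hr, not_false_eq_true, if_true, one_mul]
      exact hdevω.trans (sub_le_sub_left (le_iInfSupGap hop t _) _)
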